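/- Let $\mathcal{S} = \{(x,y)\in[0,1]^2 : x+y\le 1\}$ and let $g : \mathcal{S} \to [0,1]$ be twice continuously differentiable on (an open neighborhood of) $\mathcal{S}$, with $M = \max\{\sup_{\mathcal{S}}|\partial^2 g/\partial x^2|, \sup_{\mathcal{S}}|\partial^2 g/\partial y^2|, \sup_{\mathcal{S}}|\partial^2 g/\partial x \partial y|\}$. Fix $(x,y) \in \mathcal{S}$ and $k \in \mathbb{N}$, and let $(V_1,V_2)$ be multinomial with $k$ trials and cell probabilities $(x,y,1-x-y)$. Then $\left| \mathbb{E}\!\left[ g\!\left(\tfrac{V_1}{k}, \tfrac{V_2}{k}\right) \right] - g(x,y) \right| \le \tfrac{3M}{4k}$. -/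

import Mathlib

set_option maxHeartbeats 1000000
open Finset Polynomial ContinuousLinearMap

private lemma bsum0 (n : ℕ) (t : ℝ) :
    ∑ i ∈ range (n+1), (n.choose i : ℝ) * t^i * (1-t)^(n-i) = 1 := by
  have h := add_pow t (1-t) n
  have h1 : t + (1-t) = 1 := by ring
  rw [h1, one_pow] at h
  calc ∑ i ∈ range (n+1), (n.choose i : ℝ) * t^i * (1-t)^(n-i)
      = ∑ i ∈ range (n+1), t^i * (1-t)^(n-i) * (n.choose i : ℝ) := by
        apply sum_congr rfl; intros; ring
    _ = 1 := h.symm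

private lemma bsum1 (n : ℕ) (t : ℝ) :
    ∑ i ∈ range (n+1), (i:ℝ) * ((n.choose i : ℝ) * t^i * (1-t)^(n-i)) = n * t := by
  have h := congrArg (Polynomial.eval t) (bernsteinPolynomial.sum_smul ℝ n)
  simp only [Polynomial.eval_finset_sum, bernsteinPolynomial, nsmul_eq_mul, eval_mul, eval_pow,
    eval_X, eval_sub, eval_one, eval_natCast] at h
  rw [← h]

private lemma cast_mul_pred (m : ℕ) : ((m * (m-1) : ℕ) : ℝ) = (m:ℝ) * ((m:ℝ) - 1) := by
  cases m with
  | zero => simp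
  | succ p => push_cast [Nat.succ_sub_one]; ring

private lemma bsum2 (n : ℕ) (t : ℝ) :
    ∑ i ∈ range (n+1), (i:ℝ) * ((i:ℝ) - 1) * ((n.choose i : ℝ) * t^i * (1-t)^(n-i))
      = (n:ℝ) * ((n:ℝ) - 1) * t^2 := by
  have h := congrArg (Polynomial.eval t) (bernsteinPolynomial.sum_mul_smul ℝ n)
  simp only [Polynomial.eval_finset_sum, bernsteinPolynomial, nsmul_eq_mul, eval_mul, eval_pow,
    eval_X, eval_sub, eval_one, eval_natCast] at h
  rw [← cast_mul_pred] ; rw [← h]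
  apply sum_congr rfl; intro i _; rw [cast_mul_pred]

private lemma bvar (n : ℕ) (hn : 1 ≤ n) (t : ℝ) :
    ∑ i ∈ range (n+1), ((i:ℝ)/n - t)^2 * ((n.choose i : ℝ) * t^i * (1-t)^(n-i))
      = t*(1-t)/n := by
  have hn0 : (n:ℝ) ≠ 0 := Nat.cast_ne_zero.2 (by omega)
  have key : ∑ i ∈ range (n+1), ((i:ℝ)/n - t)^2 * ((n.choose i : ℝ) * t^i * (1-t)^(n-i))
      = (1/n^2) * ∑ i ∈ range (n+1), (i:ℝ) * ((i:ℝ) - 1) * ((n.choose i : ℝ) * t^i * (1-t)^(n-i))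
      + (1/n^2 - 2*t/n) * ∑ i ∈ range (n+1), (i:ℝ) * ((n.choose i : ℝ) * t^i * (1-t)^(n-i))
      + t^2 * ∑ i ∈ range (n+1), (n.choose i : ℝ) * t^i * (1-t)^(n-i) := by
    rw [mul_sum, mul_sum, mul_sum, ← sum_add_distrib, ← sum_add_distrib]
    apply sum_congr rfl; intro i _
    field_simp
    ring
  rw [key, bsum0, bsum1, bsum2]
  field_simp
  ring

private lemma choose_sym (k a b : ℕ) (h : a + b ≤ k) :
    k.choose a * (k-a).choose b = k.choose b * (k-b).choose a := by
  have h1 := Nat.choose_mul (n := k) (Nat.le_add_right a b)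
  have h2 := Nat.choose_mul (n := k) (Nat.le_add_left b a)
  rw [Nat.add_sub_cancel_left] at h1
  rw [Nat.add_sub_cancel] at h2
  have h3 : (a+b).choose a = (a+b).choose b := by
    rw [← Nat.choose_symm (Nat.le_add_right a b), Nat.add_sub_cancel_left]
  rw [← h1, ← h2, h3]

private lemma tri_swap (k : ℕ) (F : ℕ → ℕ → ℝ) :
    ∑ i ∈ range (k+1), ∑ j ∈ range (k+1-i), F i j
      = ∑ j ∈ range (k+1), ∑ i ∈ range (k+1-j), F i j := by
  have h : ∀ (G : ℕ → ℕ → ℝ), ∀ i ∈ range (k+1),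
      ∑ j ∈ range (k+1-i), G i j = ∑ j ∈ range (k+1), if i + j ≤ k then G i j else 0 := by
    intro G i hi
    rw [Finset.mem_range] at hi
    rw [Finset.sum_ite, Finset.sum_const_zero, add_zero]
    apply Finset.sum_congr
    · ext j; simp only [Finset.mem_filter, Finset.mem_range]; omega
    · intros; rfl
  rw [Finset.sum_congr rfl (h F), Finset.sum_congr rfl (h (fun i j => F j i))]
  rw [Finset.sum_comm]
  apply Finset.sum_congr rfl; intro j _
  apply Finset.sum_congr rfl; intro i _
  rw [Nat.add_comm]

private lemma collapse (k : ℕ) (x y : ℝ) (f : ℕ → ℝ) :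
    ∑ i ∈ range (k+1), ∑ j ∈ range (k+1-i),
        ((k.choose i : ℝ) * ((k-i).choose j) * x^i * y^j * (1-x-y)^(k-i-j)) * f i
      = ∑ i ∈ range (k+1), f i * ((k.choose i : ℝ) * x^i * (1-x)^(k-i)) := by
  apply Finset.sum_congr rfl
  intro i hi
  rw [Finset.mem_range] at hi
  have hr : k + 1 - i = (k - i) + 1 := by omega
  have hb : (y + (1-x-y))^(k-i) = ∑ j ∈ range ((k-i)+1), y^j * (1-x-y)^((k-i)-j) * ((k-i).choose j : ℝ) :=
    add_pow y (1-x-y) (k-i)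
  have hyx : y + (1-x-y) = 1 - x := by ring
  rw [hr]
  calc ∑ j ∈ range ((k-i)+1), ((k.choose i : ℝ) * ((k-i).choose j) * x^i * y^j * (1-x-y)^(k-i-j)) * f i
      = (f i * ((k.choose i : ℝ) * x^i)) * ∑ j ∈ range ((k-i)+1), y^j * (1-x-y)^((k-i)-j) * ((k-i).choose j : ℝ) := by
        rw [Finset.mul_sum]; apply Finset.sum_congr rfl; intro j _; ring
    _ = f i * ((k.choose i : ℝ) * x^i * (1-x)^(k-i)) := by
        rw [← hb, hyx]; ring

private lemma collapse_j (k : ℕ) (x y : ℝ) (f : ℕ → ℝ) :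
    ∑ i ∈ range (k+1), ∑ j ∈ range (k+1-i),
        ((k.choose i : ℝ) * ((k-i).choose j) * x^i * y^j * (1-x-y)^(k-i-j)) * f j
      = ∑ j ∈ range (k+1), f j * ((k.choose j : ℝ) * y^j * (1-y)^(k-j)) := by
  rw [tri_swap]
  rw [← collapse k y x f]
  apply Finset.sum_congr rfl; intro a ha
  apply Finset.sum_congr rfl; intro b hb
  rw [Finset.mem_range] at ha hb
  have hab : b + a ≤ k := by omega
  have hc : k.choose b * (k-b).choose a = k.choose a * (k-a).choose b := choose_sym k b a hab
  have he : k - b - a = k - a - b := by omega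
  have hc' : (k.choose b : ℝ) * ((k-b).choose a : ℝ) = (k.choose a : ℝ) * ((k-a).choose b : ℝ) := by
    exact_mod_cast congrArg (Nat.cast : ℕ → ℝ) hc
  have hz : (1 : ℝ) - x - y = 1 - y - x := by ring
  rw [he, hz]
  calc ((k.choose b : ℝ) * ((k-b).choose a) * x^b * y^a * (1-y-x)^(k-a-b)) * f a
      = ((k.choose b : ℝ) * ((k-b).choose a)) * (x^b * y^a * (1-y-x)^(k-a-b) * f a) := by ring
    _ = ((k.choose a : ℝ) * ((k-a).choose b)) * (x^b * y^a * (1-y-x)^(k-a-b) * f a) := by rw [hc']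
    _ = ((k.choose a : ℝ) * ((k-a).choose b) * y^a * x^b * (1-y-x)^(k-a-b)) * f a := by ring

private lemma dsub (k : ℕ) (F G : ℕ → ℕ → ℝ) :
    ∑ i ∈ range (k+1), ∑ j ∈ range (k+1-i), (F i j - G i j)
      = (∑ i ∈ range (k+1), ∑ j ∈ range (k+1-i), F i j)
        - (∑ i ∈ range (k+1), ∑ j ∈ range (k+1-i), G i j) := by
  rw [← Finset.sum_sub_distrib]
  exact Finset.sum_congr rfl fun i _ => by rw [← Finset.sum_sub_distrib]

private lemma dadd (k : ℕ) (F G : ℕ → ℕ → ℝ) :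
    ∑ i ∈ range (k+1), ∑ j ∈ range (k+1-i), (F i j + G i j)
      = (∑ i ∈ range (k+1), ∑ j ∈ range (k+1-i), F i j)
        + (∑ i ∈ range (k+1), ∑ j ∈ range (k+1-i), G i j) := by
  rw [← Finset.sum_add_distrib]
  exact Finset.sum_congr rfl fun i _ => by rw [← Finset.sum_add_distrib]

private lemma dmul (k : ℕ) (c : ℝ) (F : ℕ → ℕ → ℝ) :
    ∑ i ∈ range (k+1), ∑ j ∈ range (k+1-i), c * F i j
      = c * ∑ i ∈ range (k+1), ∑ j ∈ range (k+1-i), F i j := by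
  rw [Finset.mul_sum]
  exact Finset.sum_congr rfl fun i _ => by rw [Finset.mul_sum]

private lemma abs2_half_le (M a b : ℝ) (h : 0 ≤ M) : M * (|a| + |b|)^2 / 2 ≤ M * (a^2 + b^2) := by
  have e1 : M * |a|^2 = M * a^2 := by rw [sq_abs]
  have e2 : M * |b|^2 = M * b^2 := by rw [sq_abs]
  nlinarith [mul_nonneg h (sq_nonneg (|a| - |b|)), e1, e2]
private lemma taylor2
    (S : Set (ℝ × ℝ)) (hS : S = {p : ℝ × ℝ | 0 ≤ p.1 ∧ p.1 ≤ 1 ∧ 0 ≤ p.2 ∧ p.2 ≤ 1 ∧ p.1 + p.2 ≤ 1})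
    (g gx gy gxx gxy gyy : ℝ × ℝ → ℝ)
    (hg : ∀ p ∈ S, HasFDerivAt g (gx p • (fst ℝ ℝ ℝ) + gy p • (snd ℝ ℝ ℝ)) p)
    (hgx : ∀ p ∈ S, HasFDerivAt gx (gxx p • (fst ℝ ℝ ℝ) + gxy p • (snd ℝ ℝ ℝ)) p)
    (hgy : ∀ p ∈ S, HasFDerivAt gy (gxy p • (fst ℝ ℝ ℝ) + gyy p • (snd ℝ ℝ ℝ)) p)
    (M : ℝ) (hM : ∀ p ∈ S, |gxx p| ≤ M ∧ |gyy p| ≤ M ∧ |gxy p| ≤ M) (hM0 : 0 ≤ M)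
    (p q : ℝ × ℝ) (hp : p ∈ S) (hq : q ∈ S) :
    |g q - g p - gx p * (q.1 - p.1) - gy p * (q.2 - p.2)|
      ≤ M * ((q.1 - p.1)^2 + (q.2 - p.2)^2) := by
  set d1 : ℝ := q.1 - p.1 with hd1
  set d2 : ℝ := q.2 - p.2 with hd2
  set L : ℝ → ℝ × ℝ := fun t => (p.1 + t * d1, p.2 + t * d2) with hL
  have hp' : 0 ≤ p.1 ∧ p.1 ≤ 1 ∧ 0 ≤ p.2 ∧ p.2 ≤ 1 ∧ p.1 + p.2 ≤ 1 := by rw [hS] at hp; exact hp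
  have hq' : 0 ≤ q.1 ∧ q.1 ≤ 1 ∧ 0 ≤ q.2 ∧ q.2 ≤ 1 ∧ q.1 + q.2 ≤ 1 := by rw [hS] at hq; exact hq
  have hLmem : ∀ t ∈ Set.Icc (0:ℝ) 1, L t ∈ S := by
    intro t ht
    obtain ⟨ht0, ht1⟩ := ht
    rw [hS]
    obtain ⟨a1, a2, a3, a4, a5⟩ := hp'
    obtain ⟨b1, b2, b3, b4, b5⟩ := hq'
    refine ⟨?_, ?_, ?_, ?_, ?_⟩ <;> simp only [hL, hd1, hd2] <;> nlinarith
  have hL0 : L 0 = p := by simp [hL]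
  have hL1 : L 1 = q := by simp [hL, hd1, hd2]
  have hLder : ∀ t : ℝ, HasDerivAt L (d1, d2) t := by
    intro t
    exact ((hasDerivAt_mul_const d1).const_add p.1).prodMk
      ((hasDerivAt_mul_const d2).const_add p.2)
  have happ : ∀ a b : ℝ, ((a • (fst ℝ ℝ ℝ) + b • (snd ℝ ℝ ℝ)) : ℝ × ℝ →L[ℝ] ℝ) (d1, d2)
      = a * d1 + b * d2 := by
    intro a b
    simp [ContinuousLinearMap.add_apply, ContinuousLinearMap.smul_apply, smul_eq_mul]
  have hgder : ∀ t ∈ Set.Icc (0:ℝ) 1,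
      HasDerivAt (fun s => g (L s)) (gx (L t) * d1 + gy (L t) * d2) t := by
    intro t ht
    have h := (hg (L t) (hLmem t ht)).comp_hasDerivAt t (hLder t)
    rwa [happ] at h
  have hgxder : ∀ t ∈ Set.Icc (0:ℝ) 1,
      HasDerivAt (fun s => gx (L s)) (gxx (L t) * d1 + gxy (L t) * d2) t := by
    intro t ht
    have h := (hgx (L t) (hLmem t ht)).comp_hasDerivAt t (hLder t)
    rwa [happ] at h
  have hgyder : ∀ t ∈ Set.Icc (0:ℝ) 1,
      HasDerivAt (fun s => gy (L s)) (gxy (L t) * d1 + gyy (L t) * d2) t := by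
    intro t ht
    have h := (hgy (L t) (hLmem t ht)).comp_hasDerivAt t (hLder t)
    rwa [happ] at h
  set C : ℝ := M * (|d1| + |d2|) with hC
  have hgxlip : ∀ t ∈ Set.Icc (0:ℝ) 1, |gx (L t) - gx p| ≤ C * t := by
    intro t ht
    have key := Convex.norm_image_sub_le_of_norm_hasDerivWithin_le
      (f := fun s => gx (L s)) (f' := fun s => gxx (L s) * d1 + gxy (L s) * d2)
      (s := Set.Icc (0:ℝ) 1) (fun s hs => (hgxder s hs).hasDerivWithinAt)
      (fun s hs => by
        obtain ⟨m1, m2, m3⟩ := hM (L s) (hLmem s hs)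
        calc ‖gxx (L s) * d1 + gxy (L s) * d2‖ ≤ |gxx (L s) * d1| + |gxy (L s) * d2| := abs_add_le _ _
          _ = |gxx (L s)| * |d1| + |gxy (L s)| * |d2| := by rw [abs_mul, abs_mul]
          _ ≤ M * |d1| + M * |d2| :=
              add_le_add (mul_le_mul_of_nonneg_right m1 (abs_nonneg _))
                (mul_le_mul_of_nonneg_right m3 (abs_nonneg _))
          _ = C := by rw [hC]; ring)
      (convex_Icc 0 1) (Set.left_mem_Icc.2 zero_le_one) ht
    rw [← hL0]
    calc |gx (L t) - gx (L 0)| = ‖gx (L t) - gx (L 0)‖ := rfl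
      _ ≤ C * ‖t - 0‖ := key
      _ = C * t := by rw [sub_zero, Real.norm_eq_abs, abs_of_nonneg ht.1]
  have hgylip : ∀ t ∈ Set.Icc (0:ℝ) 1, |gy (L t) - gy p| ≤ C * t := by
    intro t ht
    have key := Convex.norm_image_sub_le_of_norm_hasDerivWithin_le
      (f := fun s => gy (L s)) (f' := fun s => gxy (L s) * d1 + gyy (L s) * d2)
      (s := Set.Icc (0:ℝ) 1) (fun s hs => (hgyder s hs).hasDerivWithinAt)
      (fun s hs => by
        obtain ⟨m1, m2, m3⟩ := hM (L s) (hLmem s hs)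
        calc ‖gxy (L s) * d1 + gyy (L s) * d2‖ ≤ |gxy (L s) * d1| + |gyy (L s) * d2| := abs_add_le _ _
          _ = |gxy (L s)| * |d1| + |gyy (L s)| * |d2| := by rw [abs_mul, abs_mul]
          _ ≤ M * |d1| + M * |d2| :=
              add_le_add (mul_le_mul_of_nonneg_right m3 (abs_nonneg _))
                (mul_le_mul_of_nonneg_right m2 (abs_nonneg _))
          _ = C := by rw [hC]; ring)
      (convex_Icc 0 1) (Set.left_mem_Icc.2 zero_le_one) ht
    rw [← hL0]
    calc |gy (L t) - gy (L 0)| = ‖gy (L t) - gy (L 0)‖ := rfl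
      _ ≤ C * ‖t - 0‖ := key
      _ = C * t := by rw [sub_zero, Real.norm_eq_abs, abs_of_nonneg ht.1]
  set A : ℝ := gx p * d1 + gy p * d2 with hA
  set B : ℝ := M * (|d1| + |d2|)^2 with hB
  have hphi : ∀ t ∈ Set.Icc (0:ℝ) 1, |(gx (L t) * d1 + gy (L t) * d2) - A| ≤ B * t := by
    intro t ht
    have h1 := hgxlip t ht
    have h2 := hgylip t ht
    calc |(gx (L t) * d1 + gy (L t) * d2) - A|
        = |(gx (L t) - gx p) * d1 + (gy (L t) - gy p) * d2| := by rw [hA]; ring_nf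
      _ ≤ |(gx (L t) - gx p) * d1| + |(gy (L t) - gy p) * d2| := abs_add_le _ _
      _ = |gx (L t) - gx p| * |d1| + |gy (L t) - gy p| * |d2| := by rw [abs_mul, abs_mul]
      _ ≤ (C * t) * |d1| + (C * t) * |d2| :=
              add_le_add (mul_le_mul_of_nonneg_right h1 (abs_nonneg _))
                (mul_le_mul_of_nonneg_right h2 (abs_nonneg _))
      _ = B * t := by rw [hB, hC]; ring
  -- upper bound
  have upper : g q - g p - A ≤ B / 2 := by
    set F : ℝ → ℝ := fun t => g (L t) - A * t - (B/2) * t^2 with hF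
    have hFder : ∀ t ∈ Set.Icc (0:ℝ) 1,
        HasDerivAt F ((gx (L t) * d1 + gy (L t) * d2) - A - B * t) t := by
      intro t ht
      have h1 : HasDerivAt (fun t : ℝ => A * t) A t := by
        simpa using (hasDerivAt_id t).const_mul A
      have h2 : HasDerivAt (fun t : ℝ => (B/2) * t^2) (B * t) t := by
        have := (hasDerivAt_pow 2 t).const_mul (B/2)
        refine this.congr_deriv ?_
        push_cast
        ring
      exact ((hgder t ht).sub h1).sub h2
    have hanti : AntitoneOn F (Set.Icc 0 1) := by
      apply antitoneOn_of_deriv_nonpos (convex_Icc 0 1)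
      · intro t ht
        exact (hFder t ht).continuousAt.continuousWithinAt
      · intro t ht
        rw [interior_Icc] at ht
        exact (hFder t (Set.mem_Icc_of_Ioo ht)).differentiableAt.differentiableWithinAt
      · intro t ht
        rw [interior_Icc] at ht
        have ht' := Set.mem_Icc_of_Ioo ht
        rw [(hFder t ht').deriv]
        have := (abs_le.1 (hphi t ht')).2
        linarith
    have := hanti (Set.left_mem_Icc.2 zero_le_one) (Set.right_mem_Icc.2 zero_le_one) zero_le_one
    simp only [hF, hL0, hL1] at this
    nlinarith [this]
  have lower : -(B / 2) ≤ g q - g p - A := by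
    set G : ℝ → ℝ := fun t => g (L t) - A * t + (B/2) * t^2 with hG
    have hGder : ∀ t ∈ Set.Icc (0:ℝ) 1,
        HasDerivAt G ((gx (L t) * d1 + gy (L t) * d2) - A + B * t) t := by
      intro t ht
      have h1 : HasDerivAt (fun t : ℝ => A * t) A t := by
        simpa using (hasDerivAt_id t).const_mul A
      have h2 : HasDerivAt (fun t : ℝ => (B/2) * t^2) (B * t) t := by
        have := (hasDerivAt_pow 2 t).const_mul (B/2)
        refine this.congr_deriv ?_
        push_cast
        ring
      exact ((hgder t ht).sub h1).add h2
    have hmono : MonotoneOn G (Set.Icc 0 1) := by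
      apply monotoneOn_of_deriv_nonneg (convex_Icc 0 1)
      · intro t ht
        exact (hGder t ht).continuousAt.continuousWithinAt
      · intro t ht
        rw [interior_Icc] at ht
        exact (hGder t (Set.mem_Icc_of_Ioo ht)).differentiableAt.differentiableWithinAt
      · intro t ht
        rw [interior_Icc] at ht
        have ht' := Set.mem_Icc_of_Ioo ht
        rw [(hGder t ht').deriv]
        have := (abs_le.1 (hphi t ht')).1
        linarith
    have := hmono (Set.left_mem_Icc.2 zero_le_one) (Set.right_mem_Icc.2 zero_le_one) zero_le_one
    simp only [hG, hL0, hL1] at this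
    nlinarith [this]
  have habs : |g q - g p - A| ≤ B / 2 := abs_le.2 ⟨lower, upper⟩
  have hBle : B / 2 ≤ M * (d1^2 + d2^2) := by
    rw [hB]
    exact abs2_half_le M d1 d2 hM0
  calc |g q - g p - gx p * (q.1 - p.1) - gy p * (q.2 - p.2)| = |g q - g p - A| := by
        rw [hA, hd1, hd2]; ring_nf
    _ ≤ B / 2 := habs
    _ ≤ M * (d1^2 + d2^2) := hBle

open Finset ContinuousLinearMap in
theorem multinomial_C2_bound
    (S : Set (ℝ × ℝ)) (hS : S = {p : ℝ × ℝ | 0 ≤ p.1 ∧ p.1 ≤ 1 ∧ 0 ≤ p.2 ∧ p.2 ≤ 1 ∧ p.1 + p.2 ≤ 1})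
    (g : ℝ × ℝ → ℝ) (hgrange : ∀ p ∈ S, g p ∈ Set.Icc (0:ℝ) 1)
    (gx gy gxx gxy gyy : ℝ × ℝ → ℝ)
    (hg : ∀ p ∈ S, HasFDerivAt g (gx p • (fst ℝ ℝ ℝ) + gy p • (snd ℝ ℝ ℝ)) p)
    (hgx : ∀ p ∈ S, HasFDerivAt gx (gxx p • (fst ℝ ℝ ℝ) + gxy p • (snd ℝ ℝ ℝ)) p)
    (hgy : ∀ p ∈ S, HasFDerivAt gy (gxy p • (fst ℝ ℝ ℝ) + gyy p • (snd ℝ ℝ ℝ)) p)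
    (M : ℝ) (hM : ∀ p ∈ S, |gxx p| ≤ M ∧ |gyy p| ≤ M ∧ |gxy p| ≤ M)
    (x y : ℝ) (hxy : (x, y) ∈ S) (k : ℕ) (hk : 1 ≤ k) :
    |(∑ i ∈ range (k+1), ∑ j ∈ range (k+1-i),
        g ((i : ℝ)/k, (j : ℝ)/k) * (k.choose i) * ((k-i).choose j) *
          x ^ i * y ^ j * (1 - x - y) ^ (k - i - j)) - g (x, y)|
      ≤ 3 * M / (4 * k) := by
  have hxy' := hxy
  rw [hS] at hxy'
  obtain ⟨hx0, hx1, hy0, hy1, hs1⟩ := hxy'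
  have hM0 : 0 ≤ M := le_trans (abs_nonneg _) (hM (x, y) hxy).1
  have hkpos : (0:ℝ) < k := by
    have : 0 < k := by omega
    exact_mod_cast this
  have hz0 : (0:ℝ) ≤ 1 - x - y := by linarith
  -- abbreviations (plain defs to keep syntactic control)
  have hwpos : ∀ i j : ℕ, 0 ≤ (k.choose i : ℝ) * ((k-i).choose j) * x^i * y^j * (1-x-y)^(k-i-j) :=
    fun i j =>
      mul_nonneg (mul_nonneg (mul_nonneg (mul_nonneg (Nat.cast_nonneg _) (Nat.cast_nonneg _))
        (pow_nonneg hx0 _)) (pow_nonneg hy0 _)) (pow_nonneg hz0 _)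
  -- moment identities
  have S0 : ∑ i ∈ range (k+1), ∑ j ∈ range (k+1-i),
      ((k.choose i : ℝ) * ((k-i).choose j) * x^i * y^j * (1-x-y)^(k-i-j)) * (1:ℝ) = 1 := by
    rw [collapse k x y (fun _ => (1:ℝ))]
    simp only [one_mul]
    exact bsum0 k x
  have S1x : ∑ i ∈ range (k+1), ∑ j ∈ range (k+1-i),
      ((k.choose i : ℝ) * ((k-i).choose j) * x^i * y^j * (1-x-y)^(k-i-j)) * ((i:ℝ)/k - x) = 0 := by
    rw [collapse k x y (fun i => (i:ℝ)/k - x)]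
    have e : ∀ i ∈ range (k+1), ((i:ℝ)/k - x) * ((k.choose i : ℝ) * x^i * (1-x)^(k-i))
        = (1/k) * ((i:ℝ) * ((k.choose i : ℝ) * x^i * (1-x)^(k-i)))
          - x * ((k.choose i : ℝ) * x^i * (1-x)^(k-i)) := by
      intro i _; field_simp
    rw [sum_congr rfl e, Finset.sum_sub_distrib, ← Finset.mul_sum, ← Finset.mul_sum, bsum1, bsum0]
    field_simp
    ring
  have S1y : ∑ i ∈ range (k+1), ∑ j ∈ range (k+1-i),
      ((k.choose i : ℝ) * ((k-i).choose j) * x^i * y^j * (1-x-y)^(k-i-j)) * ((j:ℝ)/k - y) = 0 := by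
    rw [collapse_j k x y (fun j => (j:ℝ)/k - y)]
    have e : ∀ j ∈ range (k+1), ((j:ℝ)/k - y) * ((k.choose j : ℝ) * y^j * (1-y)^(k-j))
        = (1/k) * ((j:ℝ) * ((k.choose j : ℝ) * y^j * (1-y)^(k-j)))
          - y * ((k.choose j : ℝ) * y^j * (1-y)^(k-j)) := by
      intro j _; field_simp
    rw [sum_congr rfl e, Finset.sum_sub_distrib, ← Finset.mul_sum, ← Finset.mul_sum, bsum1, bsum0]
    field_simp
    ring
  have S2x : ∑ i ∈ range (k+1), ∑ j ∈ range (k+1-i),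
      ((k.choose i : ℝ) * ((k-i).choose j) * x^i * y^j * (1-x-y)^(k-i-j)) * ((i:ℝ)/k - x)^2
        = x*(1-x)/k := by
    rw [collapse k x y (fun i => ((i:ℝ)/k - x)^2)]
    exact bvar k hk x
  have S2y : ∑ i ∈ range (k+1), ∑ j ∈ range (k+1-i),
      ((k.choose i : ℝ) * ((k-i).choose j) * x^i * y^j * (1-x-y)^(k-i-j)) * ((j:ℝ)/k - y)^2
        = y*(1-y)/k := by
    rw [collapse_j k x y (fun j => ((j:ℝ)/k - y)^2)]
    exact bvar k hk y
  -- membership of grid points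
  have hmem : ∀ i ∈ range (k+1), ∀ j ∈ range (k+1-i), (((i:ℝ)/k, (j:ℝ)/k) : ℝ × ℝ) ∈ S := by
    intro i hi j hj
    rw [Finset.mem_range] at hi hj
    have hik : (i:ℝ) ≤ k := by exact_mod_cast (by omega : i ≤ k)
    have hjk : (j:ℝ) ≤ k := by exact_mod_cast (by omega : j ≤ k)
    have hijk : (i:ℝ) + j ≤ k := by exact_mod_cast (by omega : i + j ≤ k)
    rw [hS]
    refine ⟨div_nonneg (Nat.cast_nonneg _) hkpos.le, ?_,
      div_nonneg (Nat.cast_nonneg _) hkpos.le, ?_, ?_⟩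
    · exact (div_le_one hkpos).2 hik
    · exact (div_le_one hkpos).2 hjk
    · show (i:ℝ)/k + (j:ℝ)/k ≤ 1
      rw [← add_div, div_le_one hkpos]
      exact hijk
  -- pointwise Taylor bound
  have hR : ∀ i ∈ range (k+1), ∀ j ∈ range (k+1-i),
      |g ((i:ℝ)/k, (j:ℝ)/k) - g (x,y) - gx (x,y) * ((i:ℝ)/k - x) - gy (x,y) * ((j:ℝ)/k - y)|
        ≤ M * (((i:ℝ)/k - x)^2 + ((j:ℝ)/k - y)^2) := by
    intro i hi j hj
    have h := taylor2 S hS g gx gy gxx gxy gyy hg hgx hgy M hM hM0 (x,y)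
      (((i:ℝ)/k, (j:ℝ)/k)) hxy (hmem i hi j hj)
    simpa using h
  -- main rewriting
  have main_eq : (∑ i ∈ range (k+1), ∑ j ∈ range (k+1-i),
        g ((i : ℝ)/k, (j : ℝ)/k) * (k.choose i) * ((k-i).choose j) *
          x ^ i * y ^ j * (1 - x - y) ^ (k - i - j)) - g (x, y)
      = ∑ i ∈ range (k+1), ∑ j ∈ range (k+1-i),
          ((k.choose i : ℝ) * ((k-i).choose j) * x^i * y^j * (1-x-y)^(k-i-j)) *
            (g ((i:ℝ)/k, (j:ℝ)/k) - g (x,y) - gx (x,y) * ((i:ℝ)/k - x) - gy (x,y) * ((j:ℝ)/k - y)) := by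
    have expand : ∀ i ∈ range (k+1), ∀ j ∈ range (k+1-i),
        ((k.choose i : ℝ) * ((k-i).choose j) * x^i * y^j * (1-x-y)^(k-i-j)) *
          (g ((i:ℝ)/k, (j:ℝ)/k) - g (x,y) - gx (x,y) * ((i:ℝ)/k - x) - gy (x,y) * ((j:ℝ)/k - y))
        = (g ((i : ℝ)/k, (j : ℝ)/k) * (k.choose i) * ((k-i).choose j) *
            x ^ i * y ^ j * (1 - x - y) ^ (k - i - j))
          - (g (x,y) * (((k.choose i : ℝ) * ((k-i).choose j) * x^i * y^j * (1-x-y)^(k-i-j)) * (1:ℝ))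
            + (gx (x,y) * (((k.choose i : ℝ) * ((k-i).choose j) * x^i * y^j * (1-x-y)^(k-i-j)) * ((i:ℝ)/k - x))
              + gy (x,y) * (((k.choose i : ℝ) * ((k-i).choose j) * x^i * y^j * (1-x-y)^(k-i-j)) * ((j:ℝ)/k - y)))) := by
      intro i _ j _; ring
    rw [Finset.sum_congr rfl (fun i hi => Finset.sum_congr rfl (fun j hj => expand i hi j hj))]
    rw [dsub, dadd, dadd, dmul, dmul, dmul, S0, S1x, S1y]
    ring
  rw [main_eq]
  -- bound the remainder sum
  have step1 : |∑ i ∈ range (k+1), ∑ j ∈ range (k+1-i),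
      ((k.choose i : ℝ) * ((k-i).choose j) * x^i * y^j * (1-x-y)^(k-i-j)) *
        (g ((i:ℝ)/k, (j:ℝ)/k) - g (x,y) - gx (x,y) * ((i:ℝ)/k - x) - gy (x,y) * ((j:ℝ)/k - y))|
      ≤ ∑ i ∈ range (k+1), ∑ j ∈ range (k+1-i),
          ((k.choose i : ℝ) * ((k-i).choose j) * x^i * y^j * (1-x-y)^(k-i-j)) *
            (M * (((i:ℝ)/k - x)^2 + ((j:ℝ)/k - y)^2)) := by
    calc |∑ i ∈ range (k+1), ∑ j ∈ range (k+1-i),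
        ((k.choose i : ℝ) * ((k-i).choose j) * x^i * y^j * (1-x-y)^(k-i-j)) *
          (g ((i:ℝ)/k, (j:ℝ)/k) - g (x,y) - gx (x,y) * ((i:ℝ)/k - x) - gy (x,y) * ((j:ℝ)/k - y))|
        ≤ ∑ i ∈ range (k+1), |∑ j ∈ range (k+1-i),
            ((k.choose i : ℝ) * ((k-i).choose j) * x^i * y^j * (1-x-y)^(k-i-j)) *
              (g ((i:ℝ)/k, (j:ℝ)/k) - g (x,y) - gx (x,y) * ((i:ℝ)/k - x) - gy (x,y) * ((j:ℝ)/k - y))| :=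
          Finset.abs_sum_le_sum_abs _ _
      _ ≤ ∑ i ∈ range (k+1), ∑ j ∈ range (k+1-i),
            |((k.choose i : ℝ) * ((k-i).choose j) * x^i * y^j * (1-x-y)^(k-i-j)) *
              (g ((i:ℝ)/k, (j:ℝ)/k) - g (x,y) - gx (x,y) * ((i:ℝ)/k - x) - gy (x,y) * ((j:ℝ)/k - y))| :=
          Finset.sum_le_sum (fun i _ => Finset.abs_sum_le_sum_abs _ _)
      _ ≤ ∑ i ∈ range (k+1), ∑ j ∈ range (k+1-i),
            ((k.choose i : ℝ) * ((k-i).choose j) * x^i * y^j * (1-x-y)^(k-i-j)) *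
              (M * (((i:ℝ)/k - x)^2 + ((j:ℝ)/k - y)^2)) := by
          apply Finset.sum_le_sum
          intro i hi
          apply Finset.sum_le_sum
          intro j hj
          rw [abs_mul, abs_of_nonneg (hwpos i j)]
          exact mul_le_mul_of_nonneg_left (hR i hi j hj) (hwpos i j)
  have step2 : ∑ i ∈ range (k+1), ∑ j ∈ range (k+1-i),
      ((k.choose i : ℝ) * ((k-i).choose j) * x^i * y^j * (1-x-y)^(k-i-j)) *
        (M * (((i:ℝ)/k - x)^2 + ((j:ℝ)/k - y)^2))
      = M * (x*(1-x)/k) + M * (y*(1-y)/k) := by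
    have expand : ∀ i ∈ range (k+1), ∀ j ∈ range (k+1-i),
        ((k.choose i : ℝ) * ((k-i).choose j) * x^i * y^j * (1-x-y)^(k-i-j)) *
          (M * (((i:ℝ)/k - x)^2 + ((j:ℝ)/k - y)^2))
        = M * (((k.choose i : ℝ) * ((k-i).choose j) * x^i * y^j * (1-x-y)^(k-i-j)) * ((i:ℝ)/k - x)^2)
          + M * (((k.choose i : ℝ) * ((k-i).choose j) * x^i * y^j * (1-x-y)^(k-i-j)) * ((j:ℝ)/k - y)^2) := by
      intro i _ j _; ring
    rw [Finset.sum_congr rfl (fun i hi => Finset.sum_congr rfl (fun j hj => expand i hi j hj))]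
    rw [dadd, dmul, dmul, S2x, S2y]
  calc |∑ i ∈ range (k+1), ∑ j ∈ range (k+1-i),
      ((k.choose i : ℝ) * ((k-i).choose j) * x^i * y^j * (1-x-y)^(k-i-j)) *
        (g ((i:ℝ)/k, (j:ℝ)/k) - g (x,y) - gx (x,y) * ((i:ℝ)/k - x) - gy (x,y) * ((j:ℝ)/k - y))|
      ≤ M * (x*(1-x)/k) + M * (y*(1-y)/k) := step2 ▸ step1
    _ ≤ 3 * M / (4 * k) := by
        have hhalf : x*(1-x) + y*(1-y) ≤ 1/2 := by nlinarith [sq_nonneg (x+y-1), sq_nonneg (x-y)]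
        have h1 : M*(x*(1-x)/k) + M*(y*(1-y)/k) = M*(x*(1-x)+y*(1-y))/(k:ℝ) := by ring
        rw [h1, div_le_div_iff₀ hkpos (by positivity : (0:ℝ) < 4*k)]
        have h2 : (M*(x*(1-x)+y*(1-y))) * (4*k) ≤ (M*(1/2)) * (4*(k:ℝ)) :=
          mul_le_mul_of_nonneg_right (mul_le_mul_of_nonneg_left hhalf hM0)
            (by positivity)
        have h3 : (0:ℝ) ≤ M * k := mul_nonneg hM0 hkpos.le
        nlinarith [h2, h3]
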